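/- arXiv:1104.0293 — 2 statements merged into one kernel-verified Lean document; each statement's English description precedes it below -/
import Mathlib

section
/- Let H be a reduced, commutative, cancellative, atomic monoid satisfying the ascending chain condition on principal ideals. Then c(H) = sup{μ(a) : a ∈ H, A_a(∼_H) ≠ ∅, |R_a| > 1}. -/
namespace CMR

variable {α : Type*} [CancelCommMonoid α]

/-- The factorization monoid `Z(H)`: the free abelian monoid over the set of atoms of `H`,
modeled as multisets of atoms. -/
abbrev Fac (α : Type*) [CancelCommMonoid α] : Type _ := Multiset {u : α // Irreducible u}

/-- The factorization homomorphism `π : Z(H) → H`. -/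
def piF (z : Fac α) : α := (z.map Subtype.val).prod

/-- `Z a`: the set of factorizations of `a`. -/
def Z (a : α) : Set (Fac α) := {z | piF z = a}

/-- `L a`: the set of lengths of `a`. -/
def L (a : α) : Set ℕ := {n | ∃ z ∈ Z a, Multiset.card z = n}

/-- `Zk a k`: the factorizations of `a` of length `k`. -/
def Zk (a : α) (k : ℕ) : Set (Fac α) := {z ∈ Z a | Multiset.card z = k}

/-- `ZM a M`: the factorizations of `a` whose length lies in `M`. -/
def ZM (a : α) (M : Set ℕ) : Set (Fac α) := {z ∈ Z a | Multiset.card z ∈ M}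

/-- The distance between two factorizations:
`d(z,z') = max (|z / gcd(z,z')|, |z' / gcd(z,z')|)`. -/
noncomputable def d (z z' : Fac α) : ℕ :=
  letI := Classical.decEq {u : α // Irreducible u}
  max (Multiset.card (z - z')) (Multiset.card (z' - z))

/-- The distance between two sets of factorizations, the minimum of pairwise
distances (with the convention `sInf ∅ = 0`). -/
noncomputable def dS (X Y : Set (Fac α)) : ℕ :=
  sInf {n : ℕ | ∃ x ∈ X, ∃ y ∈ Y, d x y = n}

/-- `k` and `l` are adjacent lengths of `a` (with `k < l`):
`L(a) ∩ [k, l] = {k, l}`. -/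
def Adjacent (a : α) (k l : ℕ) : Prop :=
  k ∈ L a ∧ l ∈ L a ∧ k < l ∧ ∀ m ∈ L a, k ≤ m → m ≤ l → m = k ∨ m = l

/-- A chain of factorizations of `a` from `z` to `z'` whose consecutive members
satisfy the step predicate `P`. -/
def Chain (a : α) (P : Fac α → Fac α → Prop) (z z' : Fac α) : Prop :=
  ∃ (n : ℕ) (c : Fin (n + 1) → Fac α),
    c 0 = z ∧ c (Fin.last n) = z' ∧ (∀ i, c i ∈ Z a) ∧
    ∀ i : Fin n, P (c i.castSucc) (c i.succ)

/-- The catenary degree of an element: the smallest `N ∈ ℕ∞` such that any two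
factorizations of `a` are connected by an `N`-chain. -/
noncomputable def cat (a : α) : ℕ∞ :=
  sInf {N : ℕ∞ | ∀ z ∈ Z a, ∀ z' ∈ Z a,
    Chain a (fun x y => (d x y : ℕ∞) ≤ N) z z'}

/-- The equal catenary degree of an element: the smallest `N ∈ ℕ∞` such that any two
factorizations of `a` of the same length are connected by an equal-length `N`-chain. -/
noncomputable def ceq (a : α) : ℕ∞ :=
  sInf {N : ℕ∞ | ∀ z ∈ Z a, ∀ z' ∈ Z a, Multiset.card z = Multiset.card z' →
    Chain a (fun x y => (d x y : ℕ∞) ≤ N ∧ Multiset.card x = Multiset.card y) z z'}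

/-- The monotone catenary degree of an element: the smallest `N ∈ ℕ∞` such that any two
factorizations of `a` (ordered by length) are connected by a monotone `N`-chain. -/
noncomputable def cmon (a : α) : ℕ∞ :=
  sInf {N : ℕ∞ | ∀ z ∈ Z a, ∀ z' ∈ Z a, Multiset.card z ≤ Multiset.card z' →
    Chain a (fun x y => (d x y : ℕ∞) ≤ N ∧ Multiset.card x ≤ Multiset.card y) z z'}

/-- The adjacent catenary degree of an element:
`c_adj(a) = sup{d(Z_k(a), Z_l(a)) : k, l ∈ L(a) adjacent}`. -/
noncomputable def cadj (a : α) : ℕ∞ :=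
  sSup {r : ℕ∞ | ∃ k l : ℕ, Adjacent a k l ∧ r = (dS (Zk a k) (Zk a l) : ℕ∞)}

noncomputable def catH (α : Type*) [CancelCommMonoid α] : ℕ∞ := ⨆ a : α, cat a
noncomputable def ceqH (α : Type*) [CancelCommMonoid α] : ℕ∞ := ⨆ a : α, ceq a
noncomputable def cmonH (α : Type*) [CancelCommMonoid α] : ℕ∞ := ⨆ a : α, cmon a
noncomputable def cadjH (α : Type*) [CancelCommMonoid α] : ℕ∞ := ⨆ a : α, cadj a

/-- `gcd(x, y) ≠ 1`: the two factorizations share an atom. -/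
def RStep (x y : Fac α) : Prop := ∃ u, u ∈ x ∧ u ∈ y

/-- `z ≈ z'`: there is an `R`-chain concatenating `z` and `z'` in `Z a`. -/
def RRel (a : α) (z z' : Fac α) : Prop := Chain a RStep z z'

/-- `z ≈_eq z'`: there is an equal-length `R`-chain concatenating `z` and `z'` in `Z a`. -/
def RRelEq (a : α) (z z' : Fac α) : Prop :=
  Chain a (fun x y => RStep x y ∧ Multiset.card x = Multiset.card y) z z'

/-- There is a monotone `R`-chain from `z` to `z'` in `Z a`. -/
def MonRChain (a : α) (z z' : Fac α) : Prop :=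
  Chain a (fun x y => RStep x y ∧ Multiset.card x ≤ Multiset.card y) z z'

/-- `μ(a)`: the supremum, over the `R`-classes `ρ` of `Z a`, of the minimal length of
an element of `ρ`. -/
noncomputable def mu (a : α) : ℕ∞ :=
  sSup {r : ℕ∞ | ∃ z ∈ Z a,
    r = ((sInf {n : ℕ | ∃ z', RRel a z z' ∧ Multiset.card z' = n} : ℕ) : ℕ∞)}

noncomputable def muH (α : Type*) [CancelCommMonoid α] : ℕ∞ := ⨆ a : α, mu a

/-- `μ_eq(a) = sup{k ∈ L(a) : Z_k(a) has more than one ≈_eq-class}`. -/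
noncomputable def mueq (a : α) : ℕ∞ :=
  sSup {r : ℕ∞ | ∃ k ∈ L a,
    (∃ z ∈ Zk a k, ∃ z' ∈ Zk a k, ¬ RRelEq a z z') ∧ r = (k : ℕ∞)}

noncomputable def mueqH (α : Type*) [CancelCommMonoid α] : ℕ∞ := ⨆ a : α, mueq a

/-- `μ_adj(a) = sup{k ∈ L(a) : d(Z_k(a), Z_l(a)) = k for the l ∈ L(a), l < k adjacent to k}`. -/
noncomputable def muadj (a : α) : ℕ∞ :=
  sSup {r : ℕ∞ | ∃ k ∈ L a,
    (∃ l : ℕ, Adjacent a l k ∧ dS (Zk a k) (Zk a l) = k) ∧ r = (k : ℕ∞)}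

noncomputable def muadjH (α : Type*) [CancelCommMonoid α] : ℕ∞ := ⨆ a : α, muadj a

/-- The monoid of relations of `H`, as a subset of `Z(H) × Z(H)`. -/
def relMon (α : Type*) [CancelCommMonoid α] : Set (Fac α × Fac α) :=
  {p | piF p.1 = piF p.2}

/-- The monoid of equal-length relations of `H`. -/
def relMonEq (α : Type*) [CancelCommMonoid α] : Set (Fac α × Fac α) :=
  {p | piF p.1 = piF p.2 ∧ Multiset.card p.1 = Multiset.card p.2}

/-- The monoid of monotone relations of `H`. -/
def relMonMon (α : Type*) [CancelCommMonoid α] : Set (Fac α × Fac α) :=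
  {p | piF p.1 = piF p.2 ∧ Multiset.card p.1 ≤ Multiset.card p.2}

/-- `p` is an atom (irreducible element) of the reduced submonoid `S` of `Z(H) × Z(H)`. -/
def IsAtomIn (S : Set (Fac α × Fac α)) (p : Fac α × Fac α) : Prop :=
  p ∈ S ∧ p ≠ 0 ∧ ∀ q ∈ S, ∀ r ∈ S, p = q + r → q = 0 ∨ r = 0

/-- `A_a(S) = A(S) ∩ (Z(a) × Z(a))`. -/
def AtomsAt (S : Set (Fac α × Fac α)) (a : α) : Set (Fac α × Fac α) :=
  {p | IsAtomIn S p ∧ p.1 ∈ Z a ∧ p.2 ∈ Z a}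

/-- The tame degree `t(a, x)`. -/
noncomputable def tdeg (a : α) (x : Fac α) : ℕ∞ :=
  sInf {N : ℕ∞ | ∀ z ∈ Z a, (∃ w ∈ Z a, x ≤ w) →
    ∃ z' ∈ Z a, x ≤ z' ∧ (d z z' : ℕ∞) ≤ N}

/-- The tame degree `t(H) = sup{t(a, u) : a ∈ H, u ∈ A(H)}`. -/
noncomputable def tH (α : Type*) [CancelCommMonoid α] : ℕ∞ :=
  ⨆ (a : α) (u : {u : α // Irreducible u}), tdeg a {u}

/-- The `m`-adjacent catenary degree of an element:
`c_{ad,m}(a) = sup{d(Z_k(a), Z_{[k-m,k)}(a)) : k ∈ L(a)}`. -/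
noncomputable def cadm (m : ℕ) (a : α) : ℕ∞ :=
  sSup {r : ℕ∞ | ∃ k ∈ L a, r = (dS (Zk a k) (ZM a (Set.Ico (k - m) k)) : ℕ∞)}

noncomputable def cadmH (α : Type*) [CancelCommMonoid α] (m : ℕ) : ℕ∞ := ⨆ a : α, cadm m a

/-- `μ_{ad,m}(a) = sup{k ∈ L(a) : d(Z_k(a), Z_{[k-m,k)}(a)) = k}`. -/
noncomputable def muadm (m : ℕ) (a : α) : ℕ∞ :=
  sSup {r : ℕ∞ | ∃ k ∈ L a, dS (Zk a k) (ZM a (Set.Ico (k - m) k)) = k ∧ r = (k : ℕ∞)}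

noncomputable def muadmH (α : Type*) [CancelCommMonoid α] (m : ℕ) : ℕ∞ := ⨆ a : α, muadm m a

/-- `H` is reduced: the only unit is `1`. -/
def Reduced (α : Type*) [CancelCommMonoid α] : Prop := ∀ a : α, IsUnit a → a = 1

/-- `H` is atomic: every element is a product of atoms. -/
def Atomic (α : Type*) [CancelCommMonoid α] : Prop := ∀ a : α, ∃ z : Fac α, piF z = a

/-- The ascending chain condition on principal ideals. -/
def ACCP (α : Type*) [CancelCommMonoid α] : Prop :=
  ∀ f : ℕ → α, (∀ n, f (n + 1) ∣ f n) → ∃ N, ∀ n, N ≤ n → f N ∣ f n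

/-! Two factorizations of `a` sharing an atom `u` become, after removing `u`, factorizations of a
proper divisor of `a`. Since strict divisibility is well-founded under ACCP, induction shows that
factorizations in one `R`-class of `a` are joined by chains whose steps are bounded by
`D = sup μ(b)`, and two classes are joined by a single step between representatives of minimal
length, whose distance is at most `μ(a) ≤ D`. Conversely, a chain leaving the class of `z` contains
a step between factorizations without common atom; its distance is at least the length of its
source, which lies in the class of `z`, so `μ(a) ≤ c(a)`. A pair of non-equivalent factorizations
is an atom of `∼_H`, since any splitting of it yields an `R`-chain through a mixed factorization. -/

open Relation

@[simp]
theorem piF_zero : piF (0 : Fac α) = 1 := by simp [piF]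

theorem piF_cons (u : {u : α // Irreducible u}) (x : Fac α) : piF (u ::ₘ x) = u.val * piF x := by
  simp [piF]

theorem piF_add (x y : Fac α) : piF (x + y) = piF x * piF y := by simp [piF]

theorem eq_zero_of_piF_eq_one {x : Fac α} (h : piF x = 1) : x = 0 := by
  classical
  by_contra hx
  obtain ⟨u, hu⟩ := Multiset.exists_mem_of_ne_zero hx
  have hdvd : u.val ∣ piF x := ⟨piF (x.erase u), by rw [← piF_cons, Multiset.cons_erase hu]⟩
  rw [h] at hdvd
  exact u.2.not_isUnit (isUnit_of_dvd_one hdvd)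

theorem _root_.Irreducible.not_mul_dvd_self {u : α} (hu : Irreducible u) (b : α) : ¬ u * b ∣ b := by
  rintro ⟨t, ht⟩
  have hut : u * t = 1 :=
    mul_left_cancel (a := b) (by rw [mul_one, ← mul_assoc, mul_comm b u, ← ht])
  exact hu.not_isUnit (.of_mul_eq_one t hut)

theorem d_eq_max_card_sub [DecidableEq {u : α // Irreducible u}] (x y : Fac α) :
    d x y = max (Multiset.card (x - y)) (Multiset.card (y - x)) := by
  unfold d
  congr <;> exact Subsingleton.elim _ _

theorem d_cons (u : {u : α // Irreducible u}) (x y : Fac α) : d (u ::ₘ x) (u ::ₘ y) = d x y := by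
  classical
  simp only [d_eq_max_card_sub, Multiset.sub_cons, Multiset.erase_cons_head]

theorem d_le_max_card (x y : Fac α) : d x y ≤ max (Multiset.card x) (Multiset.card y) := by
  classical
  rw [d_eq_max_card_sub]
  exact max_le_max (Multiset.card_le_card (Multiset.sub_le_self _ _))
    (Multiset.card_le_card (Multiset.sub_le_self _ _))

theorem card_le_d_of_not_rStep {x y : Fac α} (h : ¬ RStep x y) : Multiset.card x ≤ d x y := by
  classical
  have hxy : x - y = x := by
    ext v
    by_cases hv : v ∈ x
    · rw [Multiset.count_sub, Multiset.count_eq_zero.2 fun hvy => h ⟨v, hv, hvy⟩, Nat.sub_zero]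
    · simp [Multiset.count_eq_zero.2 hv]
  rw [d_eq_max_card_sub, hxy]
  exact le_max_left _ _

abbrev NChain (a : α) (N : ℕ∞) : Fac α → Fac α → Prop := Chain a fun x y => (d x y : ℕ∞) ≤ N

def ChainConnected (a : α) (N : ℕ∞) : Prop := ∀ z ∈ Z a, ∀ z' ∈ Z a, NChain a N z z'

section Chains

def Step (a : α) (P : Fac α → Fac α → Prop) (x y : Fac α) : Prop :=
  x ∈ Z a ∧ y ∈ Z a ∧ P x y

variable {a : α} {P : Fac α → Fac α → Prop} {x y z z' : Fac α}

theorem chain_refl (hz : z ∈ Z a) : Chain a P z z :=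
  ⟨0, fun _ => z, rfl, rfl, fun _ => hz, fun i => i.elim0⟩

theorem Chain.head (hs : Step a P z y) (hc : Chain a P y z') : Chain a P z z' := by
  obtain ⟨n, c, h0, hl, hmem, hstep⟩ := hc
  refine ⟨n + 1, Fin.cons z c, Fin.cons_zero _ _, ?_, ?_, ?_⟩
  · rw [← Fin.succ_last, Fin.cons_succ, hl]
  · intro i
    induction i using Fin.cases with
    | zero => exact hs.1
    | succ j => exact hmem j
  · intro i
    induction i using Fin.cases with
    | zero => simpa [h0] using hs.2.2
    | succ j => simpa [← Fin.succ_castSucc] using hstep j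

theorem chain_iff_reflTransGen :
    Chain a P z z' ↔ z ∈ Z a ∧ z' ∈ Z a ∧ ReflTransGen (Step a P) z z' := by
  constructor
  · rintro ⟨n, c, rfl, rfl, hmem, hstep⟩
    refine ⟨hmem 0, hmem _, ?_⟩
    have hreach : ∀ i : Fin (n + 1), ReflTransGen (Step a P) (c 0) (c i) := by
      intro i
      induction i using Fin.induction with
      | zero => exact .refl
      | succ j ih => exact ih.tail ⟨hmem _, hmem _, hstep j⟩
    exact hreach _
  · rintro ⟨hz, hz', hr⟩
    induction hr using ReflTransGen.head_induction_on with
    | refl => exact chain_refl hz'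
    | head hstep _ ih => exact Chain.head hstep (ih hstep.2.1)

theorem Chain.single (hs : Step a P z z') : Chain a P z z' :=
  Chain.head hs (chain_refl hs.2.1)

theorem Chain.trans (h₁ : Chain a P z y) (h₂ : Chain a P y z') : Chain a P z z' := by
  rw [chain_iff_reflTransGen] at h₁ h₂ ⊢
  exact ⟨h₁.1, h₂.2.1, h₁.2.2.trans h₂.2.2⟩

theorem NChain.cons {b : α} {N : ℕ∞} (u : {u : α // Irreducible u}) (hab : u.val * b = a)
    (h : NChain b N z z') :
    NChain a N (u ::ₘ z) (u ::ₘ z') := by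
  obtain ⟨n, c, rfl, rfl, hmem, hstep⟩ := h
  refine ⟨n, fun i => u ::ₘ c i, rfl, rfl, fun i => ?_, fun i => ?_⟩
  · change piF (u ::ₘ c i) = a
    rw [piF_cons, hmem i, hab]
  · change (d (u ::ₘ _) (u ::ₘ _) : ℕ∞) ≤ N
    rw [d_cons]
    exact hstep i

end Chains

theorem exists_rel_of_reflTransGen {β : Type*} {r : β → β → Prop} {p : β → Prop} {x y : β}
    (h : ReflTransGen r x y) (hx : p x) (hy : ¬ p y) : ∃ u v, r u v ∧ p u ∧ ¬ p v := by
  induction h with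
  | refl => exact absurd hx hy
  | @tail b c _ hbc ih =>
    by_cases hb : p b
    · exact ⟨b, c, hbc, hb, hy⟩
    · exact ih hb

section RClasses

variable {a : α} {x y z z' : Fac α}

theorem RStep.symm (h : RStep x y) : RStep y x :=
  let ⟨u, hx, hy⟩ := h
  ⟨u, hy, hx⟩

theorem rRel_refl (hz : z ∈ Z a) : RRel a z z := chain_refl hz

theorem RRel.symm (h : RRel a z z') : RRel a z' z := by
  rw [RRel, chain_iff_reflTransGen] at h ⊢
  have : Std.Symm (Step a RStep) := ⟨fun _ _ ⟨hx, hy, hs⟩ => ⟨hy, hx, hs.symm⟩⟩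
  exact ⟨h.2.1, h.1, Std.Symm.symm _ _ h.2.2⟩

theorem RRel.trans (h₁ : RRel a z y) (h₂ : RRel a y z') : RRel a z z' := Chain.trans h₁ h₂

theorem RRel.mem_right (h : RRel a z z') : z' ∈ Z a := (chain_iff_reflTransGen.1 h).2.1

theorem exists_rRel_card_le_mu (hz : z ∈ Z a) :
    ∃ w, RRel a z w ∧ (Multiset.card w : ℕ∞) ≤ mu a := by
  have hne : {n : ℕ | ∃ z', RRel a z z' ∧ Multiset.card z' = n}.Nonempty :=
    ⟨_, z, rRel_refl hz, rfl⟩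
  obtain ⟨w, hzw, hw⟩ := Nat.sInf_mem hne
  exact ⟨w, hzw, hw ▸ le_sSup ⟨z, hz, rfl⟩⟩

theorem ne_zero_of_mem_relMon {p : Fac α × Fac α} (hp : p ∈ relMon α) (h0 : p ≠ 0) :
    p.1 ≠ 0 ∧ p.2 ≠ 0 := by
  obtain ⟨s, t⟩ := p
  replace hp : piF s = piF t := hp
  constructor <;> rintro rfl <;> apply h0
  · rw [eq_zero_of_piF_eq_one (hp.symm.trans piF_zero)]
    rfl
  · rw [eq_zero_of_piF_eq_one (hp.trans piF_zero)]
    rfl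

theorem isAtomIn_relMon_of_not_rRel (hz : z ∈ Z a) (hz' : z' ∈ Z a) (h : ¬ RRel a z z') :
    IsAtomIn (relMon α) (z, z') := by
  refine ⟨hz.trans hz'.symm, fun h0 => h ?_, ?_⟩
  · obtain ⟨rfl, rfl⟩ := Prod.mk_eq_zero.1 h0
    exact rRel_refl hz
  rintro ⟨q, q'⟩ hq ⟨r, r'⟩ hr hqr
  by_contra! hne
  obtain ⟨rfl, rfl⟩ := Prod.mk.inj hqr
  obtain ⟨u, hu⟩ := Multiset.exists_mem_of_ne_zero (ne_zero_of_mem_relMon hr hne.2).1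
  obtain ⟨v, hv⟩ := Multiset.exists_mem_of_ne_zero (ne_zero_of_mem_relMon hq hne.1).2
  have hmixed : q' + r ∈ Z a := by
    change piF (q' + r) = a
    rw [piF_add, ← show piF q = piF q' from hq, ← piF_add]
    exact hz
  have h₁ : RRel a (q + r) (q' + r) :=
    Chain.single ⟨hz, hmixed, u, Multiset.mem_add.2 (.inr hu), Multiset.mem_add.2 (.inr hu)⟩
  have h₂ : RRel a (q' + r) (q' + r') :=
    Chain.single ⟨hmixed, hz', v, Multiset.mem_add.2 (.inl hv), Multiset.mem_add.2 (.inl hv)⟩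
  exact h (h₁.trans h₂)

theorem exists_rRel_card_le_of_chain {N : ℕ∞} (hz : z ∈ Z a) (h : ¬ RRel a z z')
    (hc : NChain a N z z') :
    ∃ x, RRel a z x ∧ (Multiset.card x : ℕ∞) ≤ N := by
  obtain ⟨x, y, ⟨hx, hy, hxy⟩, hzx, hzy⟩ :=
    exists_rel_of_reflTransGen (chain_iff_reflTransGen.1 hc).2.2 (rRel_refl hz) h
  have hdisj : ¬ RStep x y := fun hs => hzy (hzx.trans (Chain.single ⟨hx, hy, hs⟩))
  exact ⟨x, hzx, le_trans (by exact_mod_cast card_le_d_of_not_rStep hdisj) hxy⟩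

theorem mu_le_cat (h : ∃ z ∈ Z a, ∃ z' ∈ Z a, ¬ RRel a z z') : mu a ≤ cat a := by
  obtain ⟨z₁, hz₁, z₂, hz₂, h₁₂⟩ := h
  refine sSup_le ?_
  rintro _ ⟨w, hw, rfl⟩
  refine le_sInf fun N hN => ?_
  obtain ⟨y, hy, hwy⟩ : ∃ y ∈ Z a, ¬ RRel a w y := by
    by_cases hw₁ : RRel a w z₁
    · exact ⟨z₂, hz₂, fun hw₂ => h₁₂ (hw₁.symm.trans hw₂)⟩
    · exact ⟨z₁, hz₁, hw₁⟩
  obtain ⟨x, hwx, hx⟩ := exists_rRel_card_le_of_chain hw hwy (hN w hw y hy)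
  have hmin : sInf {n : ℕ | ∃ w', RRel a w w' ∧ Multiset.card w' = n} ≤ Multiset.card x :=
    Nat.sInf_le ⟨x, hwx, rfl⟩
  exact le_trans (by exact_mod_cast hmin) hx

end RClasses

theorem wellFounded_strictDvd (haccp : ACCP α) : WellFounded fun b a : α => b ∣ a ∧ ¬ a ∣ b :=
  wellFounded_iff_isEmpty_descending_chain.2 ⟨fun ⟨f, hf⟩ => by
    obtain ⟨N, hN⟩ := haccp f fun n => (hf n).1
    exact (hf N).2 (hN (N + 1) N.le_succ)⟩

section UpperBound

variable {a : α} {N : ℕ∞}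

theorem chain_of_rStep
    (ih : ∀ b : α, b ∣ a ∧ ¬ a ∣ b → ChainConnected b N)
    {x y : Fac α} (hx : x ∈ Z a) (hy : y ∈ Z a) (hxy : RStep x y) :
    NChain a N x y := by
  classical
  obtain ⟨u, hux, huy⟩ := hxy
  set b := piF (x.erase u)
  have hub : u.val * b = a := by rw [← piF_cons, Multiset.cons_erase hux]; exact hx
  have hy' : x.erase u ∈ Z b ∧ y.erase u ∈ Z b := by
    refine ⟨rfl, mul_left_cancel (a := u.val) ?_⟩
    rw [← piF_cons, Multiset.cons_erase huy, hub]
    exact hy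
  have hba : b ∣ a ∧ ¬ a ∣ b := ⟨⟨u.val, by rw [← hub, mul_comm]⟩, hub ▸ u.2.not_mul_dvd_self b⟩
  simpa only [Multiset.cons_erase hux, Multiset.cons_erase huy] using
    (ih b hba _ hy'.1 _ hy'.2).cons u hub

theorem chain_of_rRel
    (ih : ∀ b : α, b ∣ a ∧ ¬ a ∣ b → ChainConnected b N)
    {z z' : Fac α} (h : RRel a z z') : NChain a N z z' := by
  obtain ⟨hz, -, hr⟩ := chain_iff_reflTransGen.1 h
  clear h
  induction hr with
  | refl => exact chain_refl hz
  | tail _ hstep hchain => exact hchain.trans (chain_of_rStep ih hstep.1 hstep.2.1 hstep.2.2)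

theorem chain_of_mu_le (haccp : ACCP α)
    (hmu : ∀ b : α, ∀ z ∈ Z b, ∀ z' ∈ Z b, ¬ RRel b z z' → mu b ≤ N) (a : α) :
    ChainConnected a N := by
  induction a using (wellFounded_strictDvd haccp).induction with
  | _ a ih =>
  intro z hz z' hz'
  by_cases hzz' : RRel a z z'
  · exact chain_of_rRel ih hzz'
  obtain ⟨w, hzw, hw⟩ := exists_rRel_card_le_mu hz
  obtain ⟨w', hz'w', hw'⟩ := exists_rRel_card_le_mu hz'
  have hww' : (d w w' : ℕ∞) ≤ N :=
    calc (d w w' : ℕ∞) ≤ (max (Multiset.card w) (Multiset.card w') : ℕ) := by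
          exact_mod_cast d_le_max_card w w'
      _ = max (Multiset.card w : ℕ∞) (Multiset.card w') := Nat.mono_cast.map_max
      _ ≤ mu a := max_le hw hw'
      _ ≤ N := hmu a z hz z' hz' hzz'
  exact (chain_of_rRel ih hzw).trans <| (Chain.single ⟨hzw.mem_right, hz'w'.mem_right, hww'⟩).trans
    (chain_of_rRel ih hz'w'.symm)

end UpperBound

theorem stmt1_general {α : Type*} [CancelCommMonoid α]
    (haccp : ACCP α) :
    catH α = sSup {r : ℕ∞ | ∃ a : α, (AtomsAt (relMon α) a).Nonempty ∧
      (∃ z ∈ Z a, ∃ z' ∈ Z a, ¬ RRel a z z') ∧ r = mu a} := by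
  apply le_antisymm
  · refine iSup_le fun a => sInf_le (chain_of_mu_le haccp ?_ a)
    intro b z hz z' hz' h
    exact le_sSup ⟨b, ⟨(z, z'), isAtomIn_relMon_of_not_rRel hz hz' h, hz, hz'⟩,
      ⟨z, hz, z', hz', h⟩, rfl⟩
  · refine sSup_le ?_
    rintro _ ⟨a, -, hsplit, rfl⟩
    exact (mu_le_cat hsplit).trans (le_iSup cat a)

/-- Let `H` be a reduced, commutative, cancellative, atomic monoid satisfying the ascending
chain condition on principal ideals. Then
`c(H) = sup{μ(a) : a ∈ H, A_a(∼_H) ≠ ∅, |R_a| > 1}`. -/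
theorem stmt1 {α : Type*} [CancelCommMonoid α]
    (hred : Reduced α) (hatomic : Atomic α) (haccp : ACCP α) :
    catH α = sSup {r : ℕ∞ | ∃ a : α, (AtomsAt (relMon α) a).Nonempty ∧
      (∃ z ∈ Z a, ∃ z' ∈ Z a, ¬ RRel a z z') ∧ r = mu a} :=
  stmt1_general haccp

end CMR
end

section
/- Let H be a reduced, commutative, cancellative, atomic monoid, let a ∈ H, and let k, l ∈ L(a) be adjacent with k < l. If there exist x ∈ Z_k(a) and y ∈ Z_l(a) connected by a monotone R-chain, then d(Z_k(a), Z_l(a)) < l; in particular μ_adj(a) ≠ l. -/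
namespace CMR

variable {α : Type*} [CancelCommMonoid α]

theorem _root_.Fin.exists_castSucc_and_not_succ {n : ℕ} {p : Fin (n + 1) → Prop}
    (h0 : p 0) (hlast : ¬ p (Fin.last n)) : ∃ i : Fin n, p i.castSucc ∧ ¬ p i.succ := by
  by_contra! h
  exact hlast (Fin.induction h0 h (Fin.last n))

theorem _root_.ENat.natCast_mem_of_sSup_eq {s : Set ℕ∞} {n : ℕ} (hn : n ≠ 0)
    (h : sSup s = n) : (n : ℕ∞) ∈ s := by
  have : Nonempty s := by
    by_contra hs
    rw [Set.not_nonempty_iff_eq_empty'.mp hs, sSup_empty] at h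
    exact hn (by simpa [eq_comm] using h)
  exact h ▸ ENat.sSup_mem_of_nonempty_of_lt_top (h ▸ ENat.natCast_lt_top n)

theorem d_comm (z z' : Fac α) : d z z' = d z' z := max_comm _ _

theorem dS_comm (X Y : Set (Fac α)) : dS X Y = dS Y X := by
  unfold dS
  congr 1
  ext n
  constructor <;> rintro ⟨x, hx, y, hy, rfl⟩ <;> exact ⟨y, hy, x, hx, d_comm _ _⟩

theorem RStep.symm_s11 {z z' : Fac α} (h : RStep z z') : RStep z' z :=
  let ⟨u, hu, hu'⟩ := h; ⟨u, hu', hu⟩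

theorem RStep.card_sub_lt [DecidableEq {u : α // Irreducible u}] {z z' : Fac α}
    (h : RStep z z') : Multiset.card (z - z') < Multiset.card z := by
  obtain ⟨u, hu, hu'⟩ := h
  have hinter : 0 < Multiset.card (z ∩ z') :=
    Multiset.card_pos_iff_exists_mem.2 ⟨u, Multiset.mem_inter.2 ⟨hu, hu'⟩⟩
  have := congrArg Multiset.card (Multiset.sub_add_inter z z')
  rw [Multiset.card_add] at this
  omega

theorem RStep.d_lt_max_card {z z' : Fac α} (h : RStep z z') :
    d z z' < max (Multiset.card z) (Multiset.card z') := by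
  let := Classical.decEq {u : α // Irreducible u}
  exact max_lt_max h.card_sub_lt h.symm_s11.card_sub_lt

theorem Adjacent.left_unique {a : α} {k k' l : ℕ} (h : Adjacent a k l) (h' : Adjacent a k' l) :
    k = k' := by
  obtain ⟨hk, -, hkl, hbetween⟩ := h
  obtain ⟨hk', -, hk'l, hbetween'⟩ := h'
  rcases le_total k k' with hle | hle
  · rcases hbetween k' hk' hle hk'l.le with h | h <;> omega
  · rcases hbetween' k hk hle hkl.le with h | h <;> omega

/-- Along a monotone chain all lengths lie in `[k, l]`, hence equal `k` or `l`; the step where the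
length leaves `k` joins `Z_k(a)` to `Z_l(a)`. -/
theorem MonRChain.exists_rStep_of_adjacent {a : α} {k l : ℕ} {x y : Fac α}
    (hxy : MonRChain a x y) (hadj : Adjacent a k l) (hx : x ∈ Zk a k) (hy : y ∈ Zk a l) :
    ∃ z ∈ Zk a k, ∃ z' ∈ Zk a l, RStep z z' := by
  obtain ⟨-, -, hkl, hbetween⟩ := hadj
  obtain ⟨n, c, rfl, rfl, hZ, hstep⟩ := hxy
  have hmono : Monotone fun i => Multiset.card (c i) :=
    Fin.monotone_iff_le_succ.2 fun i => (hstep i).2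
  have hkorl (i) : Multiset.card (c i) = k ∨ Multiset.card (c i) = l :=
    hbetween _ ⟨c i, hZ i, rfl⟩ (hx.2 ▸ hmono (Fin.zero_le i)) (hy.2 ▸ hmono (Fin.le_last i))
  obtain ⟨i, hi, hi'⟩ := Fin.exists_castSucc_and_not_succ (p := fun i => Multiset.card (c i) = k)
    hx.2 (by rw [hy.2]; exact hkl.ne')
  exact ⟨_, ⟨hZ _, hi⟩, _, ⟨hZ _, (hkorl i.succ).resolve_left hi'⟩, (hstep i).1⟩

theorem exists_adjacent_of_muadj_eq {a : α} {l : ℕ} (hl : l ≠ 0) (h : muadj a = l) :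
    ∃ k, Adjacent a k l ∧ dS (Zk a l) (Zk a k) = l := by
  obtain ⟨m, -, ⟨k, hadj, hdS⟩, hm⟩ := ENat.natCast_mem_of_sSup_eq hl h
  obtain rfl : l = m := by exact_mod_cast hm
  exact ⟨k, hadj, hdS⟩

theorem stmt11_general {α : Type*} [CancelCommMonoid α]
    (a : α) (k l : ℕ)
    (hadj : Adjacent a k l)
    (hchain : ∃ x ∈ Zk a k, ∃ y ∈ Zk a l, MonRChain a x y) :
    dS (Zk a k) (Zk a l) < l ∧ muadj a ≠ (l : ℕ∞) := by
  obtain ⟨x, hx, y, hy, hxy⟩ := hchain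
  obtain ⟨z, hz, z', hz', hzz'⟩ := hxy.exists_rStep_of_adjacent hadj hx hy
  have hkl : k < l := hadj.2.2.1
  have hdS : dS (Zk a k) (Zk a l) < l :=
    calc dS (Zk a k) (Zk a l) ≤ d z z' := Nat.sInf_le ⟨z, hz, z', hz', rfl⟩
      _ < max (Multiset.card z) (Multiset.card z') := hzz'.d_lt_max_card
      _ = l := by rw [hz.2, hz'.2, max_eq_right hkl.le]
  refine ⟨hdS, fun hmu => ?_⟩
  obtain ⟨k', hadj', hdS'⟩ := exists_adjacent_of_muadj_eq (by omega) hmu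
  obtain rfl := hadj.left_unique hadj'
  rw [dS_comm] at hdS'
  omega

/-- Let `H` be a reduced, commutative, cancellative, atomic monoid, `a ∈ H`, and let
`k, l ∈ L(a)` be adjacent with `k < l`. If there exist `x ∈ Z_k(a)` and `y ∈ Z_l(a)`
connected by a monotone `R`-chain, then `d(Z_k(a), Z_l(a)) < l`; in particular
`μ_adj(a) ≠ l`. -/
theorem stmt11 {α : Type*} [CancelCommMonoid α]
    (hred : Reduced α) (hatomic : Atomic α) (a : α) (k l : ℕ)
    (hadj : Adjacent a k l)
    (hchain : ∃ x ∈ Zk a k, ∃ y ∈ Zk a l, MonRChain a x y) :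
    dS (Zk a k) (Zk a l) < l ∧ muadj a ≠ (l : ℕ∞) :=
  stmt11_general a k l hadj hchain

end CMR
end
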